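/- arXiv:2510.23107 — 9 statements merged into one kernel-verified Lean document; each statement's English description precedes it below -/
import Mathlib

section
/- Let P ⊆ ℝ² be a finite set, let C = r_out \ r_in be a cell (r_in possibly empty), and let Ext be an extremal family for C with respect to P. Let L⁻ be an axis-parallel halfplane. If P ∩ C ∩ L⁻ ≠ ∅, then Ext ∩ L⁻ ≠ ∅. -/
/-- The box `[x1,x2] × [y1,y2] ⊆ ℝ²`. -/
def Rect (x1 x2 y1 y2 : ℝ) : Set (ℝ × ℝ) := Set.Icc x1 x2 ×ˢ Set.Icc y1 y2

/-- `E ⊆ P ∩ r` is an extremal set of the box `r` with respect to `P`. -/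
def IsExtremalSet (P r E : Set (ℝ × ℝ)) : Prop :=
  E ⊆ P ∩ r ∧ ((P ∩ r).Nonempty →
    (∃ p ∈ E, ∀ q ∈ P ∩ r, p.1 ≤ q.1) ∧
    (∃ p ∈ E, ∀ q ∈ P ∩ r, q.1 ≤ p.1) ∧
    (∃ p ∈ E, ∀ q ∈ P ∩ r, p.2 ≤ q.2) ∧
    (∃ p ∈ E, ∀ q ∈ P ∩ r, q.2 ≤ p.2))

/-- An axis-parallel (closed) halfplane. -/
def IsAxisParallelHalfplane (H : Set (ℝ × ℝ)) : Prop :=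
  ∃ a : ℝ, H = {p : ℝ × ℝ | p.1 ≤ a} ∨ H = {p : ℝ × ℝ | a ≤ p.1} ∨
    H = {p : ℝ × ℝ | p.2 ≤ a} ∨ H = {p : ℝ × ℝ | a ≤ p.2}

/-- The three subintervals `[A,a], [a,b], [b,B]` determined by `A ≤ a ≤ b ≤ B`. -/
def subInt (A a b B : ℝ) (i : Fin 3) : Set ℝ :=
  if i = 0 then Set.Icc A a else if i = 1 then Set.Icc a b else Set.Icc b B

/-- `Ext` is an extremal family for the cell `r_out \ r_in`, where
`r_out = [A1,B1] × [A2,B2]` and `rin` is either empty or a rectangle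
`[a1,b1] × [a2,b2] ⊆ r_out`.  If `rin = ∅`, `Ext` is an extremal set of
`r_out`; otherwise `Ext` is a union of extremal sets of the boxes of the
subdivision of the cell (the nine products of subintervals, omitting the
middle one which is `r_in` itself). -/
def IsExtremalFamily (P : Set (ℝ × ℝ)) (A1 B1 A2 B2 : ℝ)
    (rin Ext : Set (ℝ × ℝ)) : Prop :=
  (rin = ∅ ∧ IsExtremalSet P (Rect A1 B1 A2 B2) Ext) ∨
  (∃ a1 b1 a2 b2 : ℝ, a1 < b1 ∧ a2 < b2 ∧
    A1 ≤ a1 ∧ b1 ≤ B1 ∧ A2 ≤ a2 ∧ b2 ≤ B2 ∧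
    rin = Rect a1 b1 a2 b2 ∧
    ∃ E : Fin 3 × Fin 3 → Set (ℝ × ℝ),
      (∀ ij : Fin 3 × Fin 3, ij ≠ (1, 1) →
        IsExtremalSet P (subInt A1 a1 b1 B1 ij.1 ×ˢ subInt A2 a2 b2 B2 ij.2) (E ij)) ∧
      Ext = ⋃ ij ∈ {ij : Fin 3 × Fin 3 | ij ≠ (1, 1)}, E ij)

lemma extremal_meets (P r E : Set (ℝ × ℝ)) (hE : IsExtremalSet P r E)
    (L : Set (ℝ × ℝ)) (hL : IsAxisParallelHalfplane L)
    (p : ℝ × ℝ) (hp : p ∈ P ∩ r ∩ L) : (E ∩ L).Nonempty := by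
  obtain ⟨⟨hpP, hpr⟩, hpL⟩ := hp
  obtain ⟨hsub, hext⟩ := hE
  obtain ⟨hmin, hmax, hymin, hymax⟩ := hext ⟨p, hpP, hpr⟩
  obtain ⟨a, h | h | h | h⟩ := hL <;> subst h
  · obtain ⟨e, heE, he⟩ := hmin
    exact ⟨e, heE, le_trans (he p ⟨hpP, hpr⟩) hpL⟩
  · obtain ⟨e, heE, he⟩ := hmax
    exact ⟨e, heE, le_trans hpL (he p ⟨hpP, hpr⟩)⟩
  · obtain ⟨e, heE, he⟩ := hymin
    exact ⟨e, heE, le_trans (he p ⟨hpP, hpr⟩) hpL⟩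
  · obtain ⟨e, heE, he⟩ := hymax
    exact ⟨e, heE, le_trans hpL (he p ⟨hpP, hpr⟩)⟩

theorem extremal_family_meets_halfplane
    (P : Set (ℝ × ℝ)) (hP : P.Finite)
    (A1 B1 A2 B2 : ℝ) (hA1 : A1 < B1) (hA2 : A2 < B2)
    (rin C Ext : Set (ℝ × ℝ))
    (hC : C = Rect A1 B1 A2 B2 \ rin)
    (hExt : IsExtremalFamily P A1 B1 A2 B2 rin Ext)
    (L : Set (ℝ × ℝ)) (hL : IsAxisParallelHalfplane L)
    (hne : (P ∩ C ∩ L).Nonempty) :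
    (Ext ∩ L).Nonempty := by
  obtain ⟨q, ⟨hqP, hqC⟩, hqL⟩ := hne
  rw [hC] at hqC
  obtain ⟨hqout, hqnin⟩ := hqC
  obtain ⟨⟨hx1, hx2⟩, ⟨hy1, hy2⟩⟩ := hqout
  rcases hExt with ⟨hrin, hE⟩ | ⟨a1, b1, a2, b2, hab1, hab2, hA1a, hb1B, hA2a, hb2B,
      hrin, E, hEij, hExtEq⟩
  · exact extremal_meets P _ Ext hE L hL q ⟨⟨hqP, ⟨hx1, hx2⟩, ⟨hy1, hy2⟩⟩, hqL⟩
  · subst hrin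
    by_cases hia : q.1 ≤ a1
    case pos =>
      -- i = 0
      by_cases hja : q.2 ≤ a2
      case pos =>
        have h := extremal_meets P _ _ (hEij (0, 0) (by decide)) L hL q
          ⟨⟨hqP, ⟨⟨hx1, hia⟩, hy1, hja⟩⟩, hqL⟩
        obtain ⟨e, heE, heL⟩ := h
        exact ⟨e, by rw [hExtEq]; exact Set.mem_biUnion (by decide) heE, heL⟩
      case neg =>
        by_cases hjb : q.2 ≤ b2
        case pos =>
          have h := extremal_meets P _ _ (hEij (0, 1) (by decide)) L hL q
            ⟨⟨hqP, ⟨⟨hx1, hia⟩, le_of_lt (not_le.1 hja), hjb⟩⟩, hqL⟩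
          obtain ⟨e, heE, heL⟩ := h
          exact ⟨e, by rw [hExtEq]; exact Set.mem_biUnion (by decide) heE, heL⟩
        case neg =>
          have h := extremal_meets P _ _ (hEij (0, 2) (by decide)) L hL q
            ⟨⟨hqP, ⟨⟨hx1, hia⟩, le_of_lt (not_le.1 hjb), hy2⟩⟩, hqL⟩
          obtain ⟨e, heE, heL⟩ := h
          exact ⟨e, by rw [hExtEq]; exact Set.mem_biUnion (by decide) heE, heL⟩
    case neg =>
      by_cases hib : q.1 ≤ b1
      case pos =>
        -- i = 1, so j ≠ 1
        by_cases hja : q.2 ≤ a2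
        case pos =>
          have h := extremal_meets P _ _ (hEij (1, 0) (by decide)) L hL q
            ⟨⟨hqP, ⟨⟨le_of_lt (not_le.1 hia), hib⟩, hy1, hja⟩⟩, hqL⟩
          obtain ⟨e, heE, heL⟩ := h
          exact ⟨e, by rw [hExtEq]; exact Set.mem_biUnion (by decide) heE, heL⟩
        case neg =>
          by_cases hjb : q.2 ≤ b2
          case pos =>
            exact absurd ⟨⟨le_of_lt (not_le.1 hia), hib⟩,
              le_of_lt (not_le.1 hja), hjb⟩ hqnin
          case neg =>
            have h := extremal_meets P _ _ (hEij (1, 2) (by decide)) L hL q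
              ⟨⟨hqP, ⟨⟨le_of_lt (not_le.1 hia), hib⟩,
                le_of_lt (not_le.1 hjb), hy2⟩⟩, hqL⟩
            obtain ⟨e, heE, heL⟩ := h
            exact ⟨e, by rw [hExtEq]; exact Set.mem_biUnion (by decide) heE, heL⟩
      case neg =>
        -- i = 2
        by_cases hja : q.2 ≤ a2
        case pos =>
          have h := extremal_meets P _ _ (hEij (2, 0) (by decide)) L hL q
            ⟨⟨hqP, ⟨⟨le_of_lt (not_le.1 hib), hx2⟩, hy1, hja⟩⟩, hqL⟩
          obtain ⟨e, heE, heL⟩ := h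
          exact ⟨e, by rw [hExtEq]; exact Set.mem_biUnion (by decide) heE, heL⟩
        case neg =>
          by_cases hjb : q.2 ≤ b2
          case pos =>
            have h := extremal_meets P _ _ (hEij (2, 1) (by decide)) L hL q
              ⟨⟨hqP, ⟨⟨le_of_lt (not_le.1 hib), hx2⟩,
                le_of_lt (not_le.1 hja), hjb⟩⟩, hqL⟩
            obtain ⟨e, heE, heL⟩ := h
            exact ⟨e, by rw [hExtEq]; exact Set.mem_biUnion (by decide) heE, heL⟩
          case neg =>
            have h := extremal_meets P _ _ (hEij (2, 2) (by decide)) L hL q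
              ⟨⟨hqP, ⟨⟨le_of_lt (not_le.1 hib), hx2⟩,
                le_of_lt (not_le.1 hjb), hy2⟩⟩, hqL⟩
            obtain ⟨e, heE, heL⟩ := h
            exact ⟨e, by rw [hExtEq]; exact Set.mem_biUnion (by decide) heE, heL⟩
end

section
/- Let P ⊆ ℝ² be a finite set, let C = r_out \ r_in be a cell with r_in ≠ ∅, and let Ext be an extremal family for C with respect to P. Let L1 and L2 be two parallel axis-parallel lines (both vertical or both horizontal), let H1, H2 be closed halfplanes bounded by L1 and L2 respectively, and let S = H1 ∩ H2. If P ∩ C ∩ S ≠ ∅ and S contains a corner of r_in, then Ext ∩ S ≠ ∅. -/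
/-- `H` is a closed halfplane bounded by the vertical line `x = c`. -/
def IsVerticalHalfplaneAt (c : ℝ) (H : Set (ℝ × ℝ)) : Prop :=
  H = {p : ℝ × ℝ | p.1 ≤ c} ∨ H = {p : ℝ × ℝ | c ≤ p.1}

/-- `H` is a closed halfplane bounded by the horizontal line `y = c`. -/
def IsHorizontalHalfplaneAt (c : ℝ) (H : Set (ℝ × ℝ)) : Prop :=
  H = {p : ℝ × ℝ | p.2 ≤ c} ∨ H = {p : ℝ × ℝ | c ≤ p.2}

/-- The four corners of the rectangle `[a1,b1] × [a2,b2]`. -/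
def Corners (a1 b1 a2 b2 : ℝ) : Set (ℝ × ℝ) :=
  {(a1, a2), (a1, b2), (b1, a2), (b1, b2)}

lemma strip_helper {S : Set (ℝ × ℝ)} {f : ℝ × ℝ → ℝ}
    (hconv : ∀ u v w : ℝ × ℝ, u ∈ S → w ∈ S → f u ≤ f v → f v ≤ f w → v ∈ S)
    {q p pmin pmax : ℝ × ℝ} (hq : q ∈ S) (hp : p ∈ S)
    (h1 : f pmin ≤ f p) (h2 : f p ≤ f pmax)
    (hcase : f q ≤ f pmin ∨ f pmax ≤ f q) :
    pmin ∈ S ∨ pmax ∈ S := by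
  rcases hcase with h | h
  · exact Or.inl (hconv q pmin p hq hp h h1)
  · exact Or.inr (hconv p pmax q hp hq h2 h)

lemma subInt_rel {A a b B : ℝ} (hab : a ≤ b) (i : Fin 3) {x y t : ℝ}
    (hx : x ∈ subInt A a b B i) (hy : y ∈ subInt A a b B i)
    (ht : t = a ∨ t = b) : t ≤ x ∨ y ≤ t := by
  fin_cases i <;> simp [subInt, Set.mem_Icc] at hx hy <;> rcases ht with rfl | rfl <;>
    first
    | (left; linarith [hx.1, hx.2, hy.1, hy.2])
    | (right; linarith [hx.1, hx.2, hy.1, hy.2])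

theorem extremal_family_meets_strip
    (P : Set (ℝ × ℝ)) (hP : P.Finite)
    (A1 B1 A2 B2 a1 b1 a2 b2 : ℝ)
    (hA1 : A1 < B1) (hA2 : A2 < B2) (ha1 : a1 < b1) (ha2 : a2 < b2)
    (hsub1 : A1 ≤ a1) (hsub2 : b1 ≤ B1) (hsub3 : A2 ≤ a2) (hsub4 : b2 ≤ B2)
    (C : Set (ℝ × ℝ)) (hC : C = Rect A1 B1 A2 B2 \ Rect a1 b1 a2 b2)
    (E : Fin 3 × Fin 3 → Set (ℝ × ℝ))
    (hE : ∀ ij : Fin 3 × Fin 3, ij ≠ (1, 1) →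
      IsExtremalSet P (subInt A1 a1 b1 B1 ij.1 ×ˢ subInt A2 a2 b2 B2 ij.2) (E ij))
    (Ext : Set (ℝ × ℝ))
    (hExt : Ext = ⋃ ij ∈ {ij : Fin 3 × Fin 3 | ij ≠ (1, 1)}, E ij)
    (H1 H2 S : Set (ℝ × ℝ))
    (hpar : (∃ c1 c2 : ℝ, IsVerticalHalfplaneAt c1 H1 ∧ IsVerticalHalfplaneAt c2 H2) ∨
            (∃ c1 c2 : ℝ, IsHorizontalHalfplaneAt c1 H1 ∧ IsHorizontalHalfplaneAt c2 H2))
    (hS : S = H1 ∩ H2)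
    (hcorner : ∃ q ∈ Corners a1 b1 a2 b2, q ∈ S)
    (hne : (P ∩ C ∩ S).Nonempty) :
    (Ext ∩ S).Nonempty := by
  obtain ⟨p, ⟨hpP, hpC⟩, hpS⟩ := hne
  rw [hC] at hpC
  obtain ⟨hpout, hpnotin⟩ := hpC
  obtain ⟨hpx, hpy⟩ := hpout
  simp only [Set.mem_Icc] at hpx hpy
  -- choose the subdivision box containing p
  set i : Fin 3 := if p.1 ≤ a1 then 0 else if p.1 ≤ b1 then 1 else 2 with hi
  set j : Fin 3 := if p.2 ≤ a2 then 0 else if p.2 ≤ b2 then 1 else 2 with hj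
  have hpi : p.1 ∈ subInt A1 a1 b1 B1 i := by
    rw [hi]; unfold subInt
    split_ifs <;> simp_all [Set.mem_Icc] <;> linarith
  have hpj : p.2 ∈ subInt A2 a2 b2 B2 j := by
    rw [hj]; unfold subInt
    split_ifs <;> simp_all [Set.mem_Icc] <;> linarith
  have hij : (i, j) ≠ (1, 1) := by
    intro hcontra
    have hi1 : i = 1 := congrArg Prod.fst hcontra
    have hj1 : j = 1 := congrArg Prod.snd hcontra
    rw [hi] at hi1; rw [hj] at hj1
    apply hpnotin
    constructor <;> simp only [Set.mem_Icc]
    · split_ifs at hi1 with h1 h2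
      · exact absurd hi1 (by decide)
      · exact ⟨le_of_lt (lt_of_not_ge h1), h2⟩
      · exact absurd hi1 (by decide)
    · split_ifs at hj1 with h1 h2
      · exact absurd hj1 (by decide)
      · exact ⟨le_of_lt (lt_of_not_ge h1), h2⟩
      · exact absurd hj1 (by decide)
  obtain ⟨hEsub, hEext⟩ := hE (i, j) hij
  have hpr : p ∈ P ∩ (subInt A1 a1 b1 B1 i ×ˢ subInt A2 a2 b2 B2 j) :=
    ⟨hpP, hpi, hpj⟩
  obtain ⟨⟨pxmin, hpxminE, hpxmin⟩, ⟨pxmax, hpxmaxE, hpxmax⟩,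
      ⟨pymin, hpyminE, hpymin⟩, ⟨pymax, hpymaxE, hpymax⟩⟩ := hEext ⟨p, hpr⟩
  have hmemExt : ∀ z, z ∈ E (i, j) → z ∈ Ext := by
    intro z hz
    rw [hExt]
    exact Set.mem_biUnion hij hz
  obtain ⟨q, hqC, hqS⟩ := hcorner
  have hq1 : q.1 = a1 ∨ q.1 = b1 := by
    simp [Corners] at hqC
    rcases hqC with h | h | h | h <;> rw [h] <;> simp
  have hq2 : q.2 = a2 ∨ q.2 = b2 := by
    simp [Corners] at hqC
    rcases hqC with h | h | h | h <;> rw [h] <;> simp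
  rcases hpar with ⟨c1, c2, hH1, hH2⟩ | ⟨c1, c2, hH1, hH2⟩
  · -- vertical: use x-extremal points
    have hconv : ∀ u v w : ℝ × ℝ, u ∈ S → w ∈ S → u.1 ≤ v.1 → v.1 ≤ w.1 → v ∈ S := by
      intro u v w hu hw h1 h2
      rw [hS] at hu hw ⊢
      rcases hH1 with rfl | rfl <;> rcases hH2 with rfl | rfl <;>
        obtain ⟨hu1, hu2⟩ := hu <;> obtain ⟨hw1, hw2⟩ := hw <;>
        constructor <;>
        simp only [Set.mem_setOf_eq] at hu1 hu2 hw1 hw2 ⊢ <;> linarith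
    have hcase : q.1 ≤ pxmin.1 ∨ pxmax.1 ≤ q.1 :=
      subInt_rel (le_of_lt ha1) i (hEsub hpxminE).2.1 (hEsub hpxmaxE).2.1 hq1
    rcases strip_helper hconv hqS hpS (hpxmin p hpr) (hpxmax p hpr) hcase with h | h
    · exact ⟨pxmin, hmemExt _ hpxminE, h⟩
    · exact ⟨pxmax, hmemExt _ hpxmaxE, h⟩
  · -- horizontal: use y-extremal points
    have hconv : ∀ u v w : ℝ × ℝ, u ∈ S → w ∈ S → u.2 ≤ v.2 → v.2 ≤ w.2 → v ∈ S := by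
      intro u v w hu hw h1 h2
      rw [hS] at hu hw ⊢
      rcases hH1 with rfl | rfl <;> rcases hH2 with rfl | rfl <;>
        obtain ⟨hu1, hu2⟩ := hu <;> obtain ⟨hw1, hw2⟩ := hw <;>
        constructor <;>
        simp only [Set.mem_setOf_eq] at hu1 hu2 hw1 hw2 ⊢ <;> linarith
    have hcase : q.2 ≤ pymin.2 ∨ pymax.2 ≤ q.2 :=
      subInt_rel (le_of_lt ha2) j (hEsub hpyminE).2.2 (hEsub hpymaxE).2.2 hq2
    rcases strip_helper hconv hqS hpS (hpymin p hpr) (hpymax p hpr) hcase with h | h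
    · exact ⟨pymin, hmemExt _ hpyminE, h⟩
    · exact ⟨pymax, hmemExt _ hpymaxE, h⟩
end

section
/- Let P ⊆ ℝ² be a finite set, let C = r_out \ r_in be a cell with r_in ≠ ∅, and let Ext be an extremal family for C with respect to P. Let L1 be a vertical line and L2 a horizontal line, let H1, H2 be closed halfplanes bounded by L1 and L2 respectively, and let S = H1 ∩ H2. If P ∩ C ∩ S ≠ ∅ and the intersection point L1 ∩ L2 lies in r_in, then Ext ∩ S ≠ ∅. -/
/-- If the box `r` lies entirely inside one of the two halfplanes and some point
of `P ∩ r` lies in the other halfplane, then an extremal set of `r` meets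
`H1 ∩ H2`. -/
lemma extremal_helper (P r E : Set (ℝ × ℝ)) (h : IsExtremalSet P r E)
    (p : ℝ × ℝ) (hp : p ∈ P ∩ r)
    (c1 c2 : ℝ) (H1 H2 : Set (ℝ × ℝ))
    (hH1 : IsVerticalHalfplaneAt c1 H1) (hH2 : IsHorizontalHalfplaneAt c2 H2)
    (hcase : ((∀ q ∈ r, q ∈ H1) ∧ p ∈ H2) ∨ ((∀ q ∈ r, q ∈ H2) ∧ p ∈ H1)) :
    ∃ q ∈ E, q ∈ H1 ∩ H2 := by
  obtain ⟨hsub, hext⟩ := h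
  obtain ⟨hx1, hx2, hy1, hy2⟩ := hext ⟨p, hp⟩
  rcases hcase with ⟨hall, hpH⟩ | ⟨hall, hpH⟩
  · rcases hH2 with h2 | h2 <;> subst h2
    · obtain ⟨q, hqE, hq⟩ := hy1
      exact ⟨q, hqE, hall q (hsub hqE).2, le_trans (hq p hp) hpH⟩
    · obtain ⟨q, hqE, hq⟩ := hy2
      exact ⟨q, hqE, hall q (hsub hqE).2, le_trans hpH (hq p hp)⟩
  · rcases hH1 with h1 | h1 <;> subst h1
    · obtain ⟨q, hqE, hq⟩ := hx1
      exact ⟨q, hqE, le_trans (hq p hp) hpH, hall q (hsub hqE).2⟩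
    · obtain ⟨q, hqE, hq⟩ := hx2
      exact ⟨q, hqE, le_trans hpH (hq p hp), hall q (hsub hqE).2⟩

/-- Any point of `[A,B]` belongs to one of the three subintervals. -/
lemma pick_subInt (A a b B y : ℝ) (h1 : A ≤ y) (h2 : y ≤ B) :
    ∃ j : Fin 3, y ∈ subInt A a b B j := by
  rcases le_or_gt y a with h | h
  · exact ⟨0, by simp only [subInt, if_pos rfl]; exact ⟨h1, h⟩⟩
  rcases le_or_gt y b with h' | h'
  · exact ⟨1, by simp only [subInt]; norm_num; exact ⟨h.le, h'⟩⟩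
  · exact ⟨2, by simp only [subInt]; norm_num; exact ⟨h'.le, h2⟩⟩

theorem extremal_family_meets_quadrant
    (P : Set (ℝ × ℝ)) (hP : P.Finite)
    (A1 B1 A2 B2 a1 b1 a2 b2 : ℝ)
    (hA1 : A1 < B1) (hA2 : A2 < B2) (ha1 : a1 < b1) (ha2 : a2 < b2)
    (hsub1 : A1 ≤ a1) (hsub2 : b1 ≤ B1) (hsub3 : A2 ≤ a2) (hsub4 : b2 ≤ B2)
    (C : Set (ℝ × ℝ)) (hC : C = Rect A1 B1 A2 B2 \ Rect a1 b1 a2 b2)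
    (E : Fin 3 × Fin 3 → Set (ℝ × ℝ))
    (hE : ∀ ij : Fin 3 × Fin 3, ij ≠ (1, 1) →
      IsExtremalSet P (subInt A1 a1 b1 B1 ij.1 ×ˢ subInt A2 a2 b2 B2 ij.2) (E ij))
    (Ext : Set (ℝ × ℝ))
    (hExt : Ext = ⋃ ij ∈ {ij : Fin 3 × Fin 3 | ij ≠ (1, 1)}, E ij)
    -- `L1` is the vertical line `x = c1` and `L2` is the horizontal line `y = c2`;
    -- `H1`, `H2` are closed halfplanes bounded by `L1`, `L2` respectively.
    (c1 c2 : ℝ) (H1 H2 S : Set (ℝ × ℝ))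
    (hH1 : IsVerticalHalfplaneAt c1 H1)
    (hH2 : IsHorizontalHalfplaneAt c2 H2)
    (hS : S = H1 ∩ H2)
    (hinter : (c1, c2) ∈ Rect a1 b1 a2 b2)
    (hne : (P ∩ C ∩ S).Nonempty) :
    (Ext ∩ S).Nonempty := by
  obtain ⟨p, hp⟩ := hne
  rw [hC, hS] at hp
  obtain ⟨⟨hpP, hpOut, hpNin⟩, hpH1, hpH2⟩ := hp
  simp only [Rect, Set.mem_prod, Set.mem_Icc] at hpOut hinter
  simp only [Rect, Set.mem_prod, Set.mem_Icc, not_and_or, not_le, not_and] at hpNin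
  obtain ⟨⟨hc11, hc12⟩, hc21, hc22⟩ := hinter
  obtain ⟨⟨hpx1, hpx2⟩, hpy1, hpy2⟩ := hpOut
  -- Find a subdivision box containing `p` lying entirely in `H1` or in `H2`.
  suffices h : ∃ ij : Fin 3 × Fin 3, ij ≠ (1, 1) ∧
      p ∈ (subInt A1 a1 b1 B1 ij.1 ×ˢ subInt A2 a2 b2 B2 ij.2) ∧
      ((∀ q ∈ (subInt A1 a1 b1 B1 ij.1 ×ˢ subInt A2 a2 b2 B2 ij.2), q ∈ H1) ∨
       (∀ q ∈ (subInt A1 a1 b1 B1 ij.1 ×ˢ subInt A2 a2 b2 B2 ij.2), q ∈ H2)) by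
    obtain ⟨ij, hij, hpr, hside⟩ := h
    obtain ⟨q, hqE, hq⟩ := extremal_helper P _ (E ij) (hE ij hij) p ⟨hpP, hpr⟩
      c1 c2 H1 H2 hH1 hH2
      (hside.imp (fun h => ⟨h, hpH2⟩) (fun h => ⟨h, hpH1⟩))
    refine ⟨q, ?_, ?_⟩
    · rw [hExt]; exact Set.mem_biUnion hij hqE
    · rw [hS]; exact hq
  rcases hpNin with (h | h) | h
  · -- p.1 < a1 : the left column lies in H1 (which must be the left halfplane)
    rcases hH1 with h1 | h1
    · obtain ⟨j, hj⟩ := pick_subInt A2 a2 b2 B2 p.2 hpy1 hpy2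
      refine ⟨(0, j), by simp [Prod.ext_iff], ⟨?_, hj⟩, Or.inl ?_⟩
      · simp only [subInt, if_pos rfl]; exact ⟨hpx1, h.le⟩
      · intro q hq
        have hx : q.1 ≤ a1 := by
          have := hq.1
          simp only [subInt, if_pos rfl, Set.mem_Icc] at this
          exact this.2
        rw [h1]; exact le_trans hx hc11
    · exfalso
      rw [h1] at hpH1
      exact absurd hpH1 (by simp only [Set.mem_setOf_eq, not_le]; linarith)
  · -- b1 < p.1 : the right column lies in H1 (which must be the right halfplane)
    rcases hH1 with h1 | h1
    · exfalso
      rw [h1] at hpH1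
      exact absurd hpH1 (by simp only [Set.mem_setOf_eq, not_le]; linarith)
    · obtain ⟨j, hj⟩ := pick_subInt A2 a2 b2 B2 p.2 hpy1 hpy2
      refine ⟨(2, j), by simp [Prod.ext_iff], ⟨?_, hj⟩, Or.inl ?_⟩
      · simp only [subInt]; norm_num; exact ⟨h.le, hpx2⟩
      · intro q hq
        have hx : b1 ≤ q.1 := by
          have := hq.1
          simp only [subInt, Set.mem_Icc] at this
          norm_num at this
          exact this.1
        rw [h1]; exact le_trans hc12 hx
  · -- a1 ≤ p.1 ≤ b1 forces p.2 < a2 or b2 < p.2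
    rcases le_or_gt a1 p.1 with hx1' | hx1'
    rotate_left
    ·
      rcases hH1 with h1 | h1
      · obtain ⟨j, hj⟩ := pick_subInt A2 a2 b2 B2 p.2 hpy1 hpy2
        refine ⟨(0, j), by simp [Prod.ext_iff], ⟨?_, hj⟩, Or.inl ?_⟩
        · simp only [subInt, if_pos rfl]; exact ⟨hpx1, hx1'.le⟩
        · intro q hq
          have hx : q.1 ≤ a1 := by
            have := hq.1
            simp only [subInt, if_pos rfl, Set.mem_Icc] at this
            exact this.2
          rw [h1]; exact le_trans hx hc11
      · exfalso
        rw [h1] at hpH1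
        exact absurd hpH1 (by simp only [Set.mem_setOf_eq, not_le]; linarith)
    rcases le_or_gt p.1 b1 with hx2' | hx2'
    rotate_left
    · -- b1 < p.1, same as second case
      rcases hH1 with h1 | h1
      · exfalso
        rw [h1] at hpH1
        exact absurd hpH1 (by simp only [Set.mem_setOf_eq, not_le]; linarith)
      · obtain ⟨j, hj⟩ := pick_subInt A2 a2 b2 B2 p.2 hpy1 hpy2
        refine ⟨(2, j), by simp [Prod.ext_iff], ⟨?_, hj⟩, Or.inl ?_⟩
        · simp only [subInt]; norm_num; exact ⟨hx2'.le, hpx2⟩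
        · intro q hq
          have hx : b1 ≤ q.1 := by
            have := hq.1
            simp only [subInt, Set.mem_Icc] at this
            norm_num at this
            exact this.1
          rw [h1]; exact le_trans hc12 hx
    -- now a1 ≤ p.1 ≤ b1, so h gives p.2 < a2 ∨ b2 < p.2
    have hy := h
    obtain ⟨i, hi⟩ := pick_subInt A1 a1 b1 B1 p.1 hpx1 hpx2
    rcases hy with hy | hy
    · -- p.2 < a2 : bottom row lies in H2 (must be the lower halfplane)
      rcases hH2 with h2 | h2
      · refine ⟨(i, 0), by simp [Prod.ext_iff], ⟨hi, ?_⟩, Or.inr ?_⟩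
        · simp only [subInt, if_pos rfl]; exact ⟨hpy1, hy.le⟩
        · intro q hq
          have hyq : q.2 ≤ a2 := by
            have := hq.2
            simp only [subInt, if_pos rfl, Set.mem_Icc] at this
            exact this.2
          rw [h2]; exact le_trans hyq hc21
      · exfalso
        rw [h2] at hpH2
        exact absurd hpH2 (by simp only [Set.mem_setOf_eq, not_le]; linarith)
    · -- b2 < p.2 : top row lies in H2 (must be the upper halfplane)
      rcases hH2 with h2 | h2
      · exfalso
        rw [h2] at hpH2
        exact absurd hpH2 (by simp only [Set.mem_setOf_eq, not_le]; linarith)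
      · refine ⟨(i, 2), by simp [Prod.ext_iff], ⟨hi, ?_⟩, Or.inr ?_⟩
        · simp only [subInt]; norm_num; exact ⟨hy.le, hpy2⟩
        · intro q hq
          have hyq : b2 ≤ q.2 := by
            have := hq.2
            simp only [subInt, Set.mem_Icc] at this
            norm_num at this
            exact this.1
          rw [h2]; exact le_trans hc22 hyq
end

section
/- Let P ⊆ ℝ² be a finite set, let r be a box, and let E ⊆ P ∩ r be an extremal set of r with respect to P. Let L1 and L2 be two parallel axis-parallel lines (both vertical or both horizontal), let H1, H2 be closed halfplanes bounded by L1 and L2 respectively, and let S = H1 ∩ H2. If r intersects at most one of the lines L1, L2 and P ∩ r ∩ S ≠ ∅, then E ∩ S ≠ ∅. -/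
lemma strip_helper_s5 (P r E : Set (ℝ × ℝ)) (f : ℝ × ℝ → ℝ)
    (hE1 : E ⊆ P ∩ r)
    (hmin : ∃ e ∈ E, ∀ q ∈ P ∩ r, f e ≤ f q)
    (hmax : ∃ e ∈ E, ∀ q ∈ P ∩ r, f q ≤ f e)
    (hconv : ∀ q1 ∈ r, ∀ q2 ∈ r, ∀ t : ℝ, f q1 ≤ t → t ≤ f q2 → ∃ q ∈ r, f q = t)
    (c1 c2 : ℝ) (H1 H2 : Set (ℝ × ℝ))
    (h1 : H1 = {p : ℝ × ℝ | f p ≤ c1} ∨ H1 = {p : ℝ × ℝ | c1 ≤ f p})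
    (h2 : H2 = {p : ℝ × ℝ | f p ≤ c2} ∨ H2 = {p : ℝ × ℝ | c2 ≤ f p})
    (hmiss : (∀ q ∈ r, f q ≠ c1) ∨ (∀ q ∈ r, f q ≠ c2))
    (p : ℝ × ℝ) (hpPr : p ∈ P ∩ r) (hp1 : p ∈ H1) (hp2 : p ∈ H2) :
    (E ∩ (H1 ∩ H2)).Nonempty := by
  obtain ⟨a, haE, ha⟩ := hmin
  obtain ⟨b, hbE, hb⟩ := hmax
  have har : a ∈ r := (hE1 haE).2
  have hbr : b ∈ r := (hE1 hbE).2
  have hpr : p ∈ r := hpPr.2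
  have hap : f a ≤ f p := ha p hpPr
  have hpb : f p ≤ f b := hb p hpPr
  rcases h1 with h1 | h1 <;> rcases h2 with h2 | h2 <;> subst h1 h2
  · exact ⟨a, haE, le_trans hap hp1, le_trans hap hp2⟩
  · -- H1 = {f ≤ c1}, H2 = {c2 ≤ f}
    rcases hmiss with hm | hm
    · refine ⟨b, hbE, ?_, le_trans hp2 hpb⟩
      by_contra hc
      simp only [Set.mem_setOf_eq, not_le] at hc
      obtain ⟨q, hqr, hq⟩ := hconv p hpr b hbr c1 hp1 hc.le
      exact hm q hqr hq
    · refine ⟨a, haE, le_trans hap hp1, ?_⟩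
      by_contra hc
      simp only [Set.mem_setOf_eq, not_le] at hc
      obtain ⟨q, hqr, hq⟩ := hconv a har p hpr c2 hc.le hp2
      exact hm q hqr hq
  · -- H1 = {c1 ≤ f}, H2 = {f ≤ c2}
    rcases hmiss with hm | hm
    · refine ⟨a, haE, ?_, le_trans hap hp2⟩
      by_contra hc
      simp only [Set.mem_setOf_eq, not_le] at hc
      obtain ⟨q, hqr, hq⟩ := hconv a har p hpr c1 hc.le hp1
      exact hm q hqr hq
    · refine ⟨b, hbE, le_trans hp1 hpb, ?_⟩
      by_contra hc
      simp only [Set.mem_setOf_eq, not_le] at hc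
      obtain ⟨q, hqr, hq⟩ := hconv p hpr b hbr c2 hp2 hc.le
      exact hm q hqr hq
  · exact ⟨b, hbE, le_trans hp1 hpb, le_trans hp2 hpb⟩

theorem extremal_set_meets_parallel_strip
    (P E : Set (ℝ × ℝ)) (hP : P.Finite)
    (x1 x2 y1 y2 : ℝ) (hx : x1 ≤ x2) (hy : y1 ≤ y2)
    (r : Set (ℝ × ℝ)) (hr : r = Rect x1 x2 y1 y2)
    (hE : IsExtremalSet P r E)
    (L1 L2 H1 H2 S : Set (ℝ × ℝ))
    -- `L1`, `L2` are parallel axis-parallel lines (both vertical or both horizontal),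
    -- and `H1`, `H2` are closed halfplanes bounded by `L1`, `L2` respectively
    (hlines :
      (∃ c1 c2 : ℝ, L1 = {p : ℝ × ℝ | p.1 = c1} ∧ L2 = {p : ℝ × ℝ | p.1 = c2} ∧
        IsVerticalHalfplaneAt c1 H1 ∧ IsVerticalHalfplaneAt c2 H2) ∨
      (∃ c1 c2 : ℝ, L1 = {p : ℝ × ℝ | p.2 = c1} ∧ L2 = {p : ℝ × ℝ | p.2 = c2} ∧
        IsHorizontalHalfplaneAt c1 H1 ∧ IsHorizontalHalfplaneAt c2 H2))
    (hS : S = H1 ∩ H2)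
    -- `r` intersects at most one of the lines `L1`, `L2`
    (hatmost : r ∩ L1 = ∅ ∨ r ∩ L2 = ∅)
    (hne : (P ∩ r ∩ S).Nonempty) :
    (E ∩ S).Nonempty := by
  obtain ⟨p, hpPr, hpS⟩ := hne
  subst hS
  obtain ⟨hxmin, hxmax, hymin, hymax⟩ := hE.2 ⟨p, hpPr⟩
  rcases hlines with ⟨c1, c2, hL1, hL2, h1, h2⟩ | ⟨c1, c2, hL1, hL2, h1, h2⟩
  · refine strip_helper_s5 P r E Prod.fst hE.1 hxmin hxmax ?_ c1 c2 H1 H2 h1 h2 ?_ p hpPr hpS.1 hpS.2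
    · intro q1 hq1 q2 hq2 t ht1 ht2
      rw [hr] at hq1 hq2 ⊢
      exact ⟨(t, q1.2), ⟨⟨le_trans hq1.1.1 ht1, le_trans ht2 hq2.1.2⟩, hq1.2⟩, rfl⟩
    · rcases hatmost with h | h
      · exact Or.inl (fun q hq hc => Set.eq_empty_iff_forall_notMem.mp h q ⟨hq, by rw [hL1]; exact hc⟩)
      · exact Or.inr (fun q hq hc => Set.eq_empty_iff_forall_notMem.mp h q ⟨hq, by rw [hL2]; exact hc⟩)
  · refine strip_helper_s5 P r E Prod.snd hE.1 hymin hymax ?_ c1 c2 H1 H2 h1 h2 ?_ p hpPr hpS.1 hpS.2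
    · intro q1 hq1 q2 hq2 t ht1 ht2
      rw [hr] at hq1 hq2 ⊢
      exact ⟨(q1.1, t), ⟨hq1.1, ⟨le_trans hq1.2.1 ht1, le_trans ht2 hq2.2.2⟩⟩, rfl⟩
    · rcases hatmost with h | h
      · exact Or.inl (fun q hq hc => Set.eq_empty_iff_forall_notMem.mp h q ⟨hq, by rw [hL1]; exact hc⟩)
      · exact Or.inr (fun q hq hc => Set.eq_empty_iff_forall_notMem.mp h q ⟨hq, by rw [hL2]; exact hc⟩)
end

section
/- Let P ⊆ ℝ² be a finite set, let r be a box, and let E ⊆ P ∩ r be an extremal set of r with respect to P. Let L1 be a vertical line and L2 a horizontal line, let H1, H2 be closed halfplanes bounded by L1 and L2 respectively, and let S = H1 ∩ H2. If r intersects at most one of the lines L1, L2 and P ∩ r ∩ S ≠ ∅, then E ∩ S ≠ ∅. -/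
theorem extremal_set_meets_perpendicular_corner
    (P E : Set (ℝ × ℝ)) (hP : P.Finite)
    (x1 x2 y1 y2 : ℝ) (hx : x1 ≤ x2) (hy : y1 ≤ y2)
    (r : Set (ℝ × ℝ)) (hr : r = Rect x1 x2 y1 y2)
    (hE : IsExtremalSet P r E)
    -- `L1` is the vertical line `x = c1`, `L2` is the horizontal line `y = c2`,
    -- and `H1`, `H2` are closed halfplanes bounded by `L1`, `L2` respectively
    (c1 c2 : ℝ) (L1 L2 H1 H2 S : Set (ℝ × ℝ))
    (hL1 : L1 = {p : ℝ × ℝ | p.1 = c1})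
    (hL2 : L2 = {p : ℝ × ℝ | p.2 = c2})
    (hH1 : IsVerticalHalfplaneAt c1 H1)
    (hH2 : IsHorizontalHalfplaneAt c2 H2)
    (hS : S = H1 ∩ H2)
    -- `r` intersects at most one of the lines `L1`, `L2`
    (hatmost : r ∩ L1 = ∅ ∨ r ∩ L2 = ∅)
    (hne : (P ∩ r ∩ S).Nonempty) :
    (E ∩ S).Nonempty := by

  obtain ⟨q0, hq0⟩ := hne
  have hq0Pr : q0 ∈ P ∩ r := hq0.1
  have hq0S : q0 ∈ S := hq0.2
  subst hS hr hL1 hL2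
  obtain ⟨hq01, hq02⟩ := hq0S
  have hPr : (P ∩ Rect x1 x2 y1 y2).Nonempty := ⟨q0, hq0Pr⟩
  obtain ⟨hEsub, hext⟩ := hE
  obtain ⟨hxmin, hxmax, hymin, hymax⟩ := hext hPr
  have hq0x : q0.1 ∈ Set.Icc x1 x2 := hq0Pr.2.1
  have hq0y : q0.2 ∈ Set.Icc y1 y2 := hq0Pr.2.2
  rcases hatmost with h1 | h2
  · have hc1 : c1 < x1 ∨ x2 < c1 := by
      by_contra h
      push_neg at h
      have hmem : ((c1, y1) : ℝ × ℝ) ∈ Rect x1 x2 y1 y2 ∩ {p : ℝ × ℝ | p.1 = c1} :=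
        ⟨⟨⟨h.1, h.2⟩, ⟨le_refl _, hy⟩⟩, rfl⟩
      rw [h1] at hmem
      exact hmem
    have hrH1 : ∀ p ∈ Rect x1 x2 y1 y2, p ∈ H1 := by
      intro p hp
      rcases hH1 with rfl | rfl
      · rcases hc1 with h | h
        · exact absurd (lt_of_lt_of_le h hq0x.1) (not_lt.mpr hq01)
        · exact le_of_lt (lt_of_le_of_lt hp.1.2 h)
      · rcases hc1 with h | h
        · exact le_of_lt (lt_of_lt_of_le h hp.1.1)
        · exact absurd (lt_of_le_of_lt hq0x.2 h) (not_lt.mpr hq01)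
    rcases hH2 with rfl | rfl
    · obtain ⟨p, hpE, hp⟩ := hymin
      exact ⟨p, hpE, hrH1 p (hEsub hpE).2, le_trans (hp q0 hq0Pr) hq02⟩
    · obtain ⟨p, hpE, hp⟩ := hymax
      exact ⟨p, hpE, hrH1 p (hEsub hpE).2, le_trans hq02 (hp q0 hq0Pr)⟩
  · have hc2 : c2 < y1 ∨ y2 < c2 := by
      by_contra h
      push_neg at h
      have hmem : ((x1, c2) : ℝ × ℝ) ∈ Rect x1 x2 y1 y2 ∩ {p : ℝ × ℝ | p.2 = c2} :=
        ⟨⟨⟨le_refl _, hx⟩, ⟨h.1, h.2⟩⟩, rfl⟩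
      rw [h2] at hmem
      exact hmem
    have hrH2 : ∀ p ∈ Rect x1 x2 y1 y2, p ∈ H2 := by
      intro p hp
      rcases hH2 with rfl | rfl
      · rcases hc2 with h | h
        · exact absurd (lt_of_lt_of_le h hq0y.1) (not_lt.mpr hq02)
        · exact le_of_lt (lt_of_le_of_lt hp.2.2 h)
      · rcases hc2 with h | h
        · exact le_of_lt (lt_of_lt_of_le h hp.2.1)
        · exact absurd (lt_of_le_of_lt hq0y.2 h) (not_lt.mpr hq02)
    rcases hH1 with rfl | rfl
    · obtain ⟨p, hpE, hp⟩ := hxmin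
      exact ⟨p, hpE, le_trans (hp q0 hq0Pr) hq01, hrH2 p (hEsub hpE).2⟩
    · obtain ⟨p, hpE, hp⟩ := hxmax
      exact ⟨p, hpE, le_trans hq01 (hp q0 hq0Pr), hrH2 p (hEsub hpE).2⟩
end

section
/- For all points a, b, c ∈ ℝ², the union of the convex hull of {a, (a+b)/2, (a+c)/2} and the convex hull of {(a+b)/2, (b+c)/2, (a+c)/2} equals the parallelogram { a + s·(b − a)/2 + t·(c − a)/2 : s, t ∈ [0,1] }. That is, the union of the central medial subtriangle of triangle abc and the corner subtriangle at a is a parallelogram. -/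
private lemma mem_tri (p q r x : ℝ × ℝ) (α β γ : ℝ) (hα : 0 ≤ α) (hβ : 0 ≤ β)
    (hγ : 0 ≤ γ) (hsum : α + β + γ = 1) (hx : x = α • p + β • q + γ • r) :
    x ∈ convexHull ℝ ({p, q, r} : Set (ℝ × ℝ)) := by
  have h := Finset.centerMass_mem_convexHull (t := (Finset.univ : Finset (Fin 3)))
    (w := ![α, β, γ]) (z := ![p, q, r]) (s := ({p, q, r} : Set (ℝ × ℝ)))
    (by intro i _; fin_cases i <;> simpa) (by simp [Fin.sum_univ_three]; linarith)
    (by intro i _; fin_cases i <;> simp)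
  rw [Finset.centerMass_eq_of_sum_1 _ _ (by simp [Fin.sum_univ_three]; linarith),
    Fin.sum_univ_three] at h
  simp only [Matrix.cons_val_zero, Matrix.cons_val_one, Matrix.head_cons,
    Matrix.cons_val_two, Matrix.tail_cons] at h
  rwa [← hx] at h

/-- The union of the central medial subtriangle of the triangle `abc` and the
corner subtriangle at `a` is the parallelogram
`{ a + s·(b − a)/2 + t·(c − a)/2 : s, t ∈ [0,1] }`. -/
theorem medial_union_corner_eq_parallelogram (a b c : ℝ × ℝ) :
    convexHull ℝ {a, (1 / 2 : ℝ) • (a + b), (1 / 2 : ℝ) • (a + c)} ∪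
      convexHull ℝ {(1 / 2 : ℝ) • (a + b), (1 / 2 : ℝ) • (b + c),
        (1 / 2 : ℝ) • (a + c)} =
    {x | ∃ s ∈ Set.Icc (0 : ℝ) 1, ∃ t ∈ Set.Icc (0 : ℝ) 1,
      x = a + (s / 2) • (b - a) + (t / 2) • (c - a)} := by
  set S : Set (ℝ × ℝ) := {x | ∃ s ∈ Set.Icc (0 : ℝ) 1, ∃ t ∈ Set.Icc (0 : ℝ) 1,
      x = a + (s / 2) • (b - a) + (t / 2) • (c - a)} with hSdef
  have hS : Convex ℝ S := by
    rintro x ⟨s1, ⟨hs10, hs11⟩, t1, ⟨ht10, ht11⟩, rfl⟩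
      y ⟨s2, ⟨hs20, hs21⟩, t2, ⟨ht20, ht21⟩, rfl⟩ u v hu hv huv
    obtain rfl : v = 1 - u := by linarith
    refine ⟨u * s1 + (1 - u) * s2, ⟨by nlinarith, by nlinarith⟩,
      u * t1 + (1 - u) * t2, ⟨by nlinarith, by nlinarith⟩, ?_⟩
    module
  apply Set.eq_of_subset_of_subset
  · apply Set.union_subset <;> apply convexHull_min _ hS
    · rintro x (rfl | rfl | rfl)
      · exact ⟨0, ⟨le_refl 0, zero_le_one⟩, 0, ⟨le_refl 0, zero_le_one⟩, by module⟩
      · exact ⟨1, ⟨zero_le_one, le_refl 1⟩, 0, ⟨le_refl 0, zero_le_one⟩, by module⟩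
      · exact ⟨0, ⟨le_refl 0, zero_le_one⟩, 1, ⟨zero_le_one, le_refl 1⟩, by module⟩
    · rintro x (rfl | rfl | rfl)
      · exact ⟨1, ⟨zero_le_one, le_refl 1⟩, 0, ⟨le_refl 0, zero_le_one⟩, by module⟩
      · exact ⟨1, ⟨zero_le_one, le_refl 1⟩, 1, ⟨zero_le_one, le_refl 1⟩, by module⟩
      · exact ⟨0, ⟨le_refl 0, zero_le_one⟩, 1, ⟨zero_le_one, le_refl 1⟩, by module⟩
  · rintro x ⟨s, ⟨hs0, hs1⟩, t, ⟨ht0, ht1⟩, rfl⟩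
    by_cases h : s + t ≤ 1
    · left
      exact mem_tri _ _ _ _ (1 - s - t) s t (by linarith) hs0 ht0 (by ring) (by module)
    · right
      exact mem_tri _ _ _ _ (1 - t) (s + t - 1) (1 - s) (by linarith) (by linarith)
        (by linarith) (by ring) (by module)
end

section
/- Let r and S be axis-aligned rectangles such that r ∩ S ≠ ∅ and no corner of S lies in r. Then exactly one of the following holds: (i) r is contained in the interior of S (and intersects no edge of S); (ii) r intersects exactly one of the four edges of S; (iii) r intersects both vertical edges of S and neither horizontal edge; (iv) r intersects both horizontal edges of S and neither vertical edge. -/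
/-- Exactly one of four propositions holds. -/
def ExactlyOne4 (p1 p2 p3 p4 : Prop) : Prop :=
  (p1 ∧ ¬p2 ∧ ¬p3 ∧ ¬p4) ∨ (¬p1 ∧ p2 ∧ ¬p3 ∧ ¬p4) ∨
  (¬p1 ∧ ¬p2 ∧ p3 ∧ ¬p4) ∨ (¬p1 ∧ ¬p2 ∧ ¬p3 ∧ p4)

lemma exactlyOne4_key (I A B C D : Prop) (h11 : ¬(A ∧ C)) (h12 : ¬(A ∧ D)) (h21 : ¬(B ∧ C)) (h22 : ¬(B ∧ D))
    (hI : ¬A → ¬B → ¬C → ¬D → I) :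
    ExactlyOne4 (I ∧ ¬C ∧ ¬D ∧ ¬A ∧ ¬B) (ExactlyOne4 C D A B)
      (A ∧ B ∧ ¬C ∧ ¬D) (C ∧ D ∧ ¬A ∧ ¬B) := by
  unfold ExactlyOne4
  by_cases hA : A <;> by_cases hB : B <;> by_cases hC : C <;> by_cases hD : D
  · exact absurd ⟨hA, hC⟩ h11
  · exact absurd ⟨hA, hC⟩ h11
  · exact absurd ⟨hA, hD⟩ h12
  · -- A, B, ¬C, ¬D : case (iii)
    refine Or.inr (Or.inr (Or.inl ⟨fun h => h.2.2.2.1 hA, fun h => ?_, ⟨hA, hB, hC, hD⟩,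
      fun h => hC h.1⟩))
    rcases h with h | h | h | h
    · exact h.2.2.1 hA
    · exact h.2.2.1 hA
    · exact h.2.2.2 hB
    · exact h.2.2.1 hA
  · exact absurd ⟨hA, hC⟩ h11
  · exact absurd ⟨hA, hC⟩ h11
  · exact absurd ⟨hA, hD⟩ h12
  · -- A only : case (ii), left edge
    exact Or.inr (Or.inl ⟨fun h => h.2.2.2.1 hA, Or.inr (Or.inr (Or.inl ⟨hC, hD, hA, hB⟩)),
      fun h => hB h.2.1, fun h => hC h.1⟩)
  · exact absurd ⟨hB, hC⟩ h21
  · exact absurd ⟨hB, hC⟩ h21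
  · exact absurd ⟨hB, hD⟩ h22
  · -- B only
    exact Or.inr (Or.inl ⟨fun h => h.2.2.2.2 hB, Or.inr (Or.inr (Or.inr ⟨hC, hD, hA, hB⟩)),
      fun h => hA h.1, fun h => hC h.1⟩)
  · -- C, D : case (iv)
    refine Or.inr (Or.inr (Or.inr ⟨fun h => h.2.1 hC, fun h => ?_, fun h => h.2.2.1 hC,
      ⟨hC, hD, hA, hB⟩⟩))
    rcases h with h | h | h | h
    · exact h.2.1 hD
    · exact h.1 hC
    · exact h.1 hC
    · exact h.1 hC
  · -- C only
    exact Or.inr (Or.inl ⟨fun h => h.2.1 hC, Or.inl ⟨hC, hD, hA, hB⟩,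
      fun h => hA h.1, fun h => hD h.2.1⟩)
  · -- D only
    exact Or.inr (Or.inl ⟨fun h => h.2.2.1 hD, Or.inr (Or.inl ⟨hC, hD, hA, hB⟩),
      fun h => hA h.1, fun h => hC h.1⟩)
  · -- none : case (i)
    refine Or.inl ⟨⟨hI hA hB hC hD, hC, hD, hA, hB⟩, fun h => ?_, fun h => hA h.1,
      fun h => hC h.1⟩
    rcases h with h | h | h | h
    · exact hC h.1
    · exact hD h.2.1
    · exact hA h.2.2.1
    · exact hB h.2.2.2

/-- Let `r`, `S` be axis-aligned rectangles with `r ∩ S ≠ ∅` and no corner of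
`S` in `r`.  Then exactly one of the following holds: (i) `r ⊆ int S` and `r`
intersects no edge of `S`; (ii) `r` intersects exactly one of the four edges
of `S`; (iii) `r` intersects both vertical edges and neither horizontal edge
of `S`; (iv) `r` intersects both horizontal edges and neither vertical edge of
`S`. -/
theorem rect_no_corner_intersection_classification
    (x1 x2 y1 y2 s1 s2 t1 t2 : ℝ)
    (hx : x1 < x2) (hy : y1 < y2) (hs : s1 < s2) (ht : t1 < t2)
    (r S : Set (ℝ × ℝ))
    (hr : r = Set.Icc x1 x2 ×ˢ Set.Icc y1 y2)
    (hS : S = Set.Icc s1 s2 ×ˢ Set.Icc t1 t2)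
    (hne : (r ∩ S).Nonempty)
    (hcor : ∀ q ∈ ({(s1, t1), (s1, t2), (s2, t1), (s2, t2)} : Set (ℝ × ℝ)), q ∉ r) :
    ExactlyOne4
      -- (i) `r` is contained in the interior of `S` (and intersects no edge of `S`)
      (r ⊆ interior S ∧
        r ∩ Set.Icc s1 s2 ×ˢ ({t1} : Set ℝ) = ∅ ∧
        r ∩ Set.Icc s1 s2 ×ˢ ({t2} : Set ℝ) = ∅ ∧
        r ∩ ({s1} : Set ℝ) ×ˢ Set.Icc t1 t2 = ∅ ∧
        r ∩ ({s2} : Set ℝ) ×ˢ Set.Icc t1 t2 = ∅)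
      -- (ii) `r` intersects exactly one of the four edges of `S`
      (ExactlyOne4
        (r ∩ Set.Icc s1 s2 ×ˢ ({t1} : Set ℝ)).Nonempty
        (r ∩ Set.Icc s1 s2 ×ˢ ({t2} : Set ℝ)).Nonempty
        (r ∩ ({s1} : Set ℝ) ×ˢ Set.Icc t1 t2).Nonempty
        (r ∩ ({s2} : Set ℝ) ×ˢ Set.Icc t1 t2).Nonempty)
      -- (iii) `r` intersects both vertical edges of `S` and neither horizontal edge
      ((r ∩ ({s1} : Set ℝ) ×ˢ Set.Icc t1 t2).Nonempty ∧
        (r ∩ ({s2} : Set ℝ) ×ˢ Set.Icc t1 t2).Nonempty ∧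
        r ∩ Set.Icc s1 s2 ×ˢ ({t1} : Set ℝ) = ∅ ∧
        r ∩ Set.Icc s1 s2 ×ˢ ({t2} : Set ℝ) = ∅)
      -- (iv) `r` intersects both horizontal edges of `S` and neither vertical edge
      ((r ∩ Set.Icc s1 s2 ×ˢ ({t1} : Set ℝ)).Nonempty ∧
        (r ∩ Set.Icc s1 s2 ×ˢ ({t2} : Set ℝ)).Nonempty ∧
        r ∩ ({s1} : Set ℝ) ×ˢ Set.Icc t1 t2 = ∅ ∧
        r ∩ ({s2} : Set ℝ) ×ˢ Set.Icc t1 t2 = ∅) := by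

  subst hr hS
  obtain ⟨q, hq⟩ := hne
  simp only [Set.mem_inter_iff, Set.mem_prod, Set.mem_Icc] at hq
  have hs1x2 : s1 ≤ x2 := le_trans hq.2.1.1 hq.1.1.2
  have hx1s2 : x1 ≤ s2 := le_trans hq.1.1.1 hq.2.1.2
  have ht1y2 : t1 ≤ y2 := le_trans hq.2.2.1 hq.1.2.2
  have hy1t2 : y1 ≤ t2 := le_trans hq.1.2.1 hq.2.2.2
  have h11 : ¬((x1 ≤ s1 ∧ s1 ≤ x2) ∧ (y1 ≤ t1 ∧ t1 ≤ y2)) := by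
    have := hcor (s1, t1) (by simp)
    simp only [Set.mem_prod, Set.mem_Icc] at this; tauto
  have h12 : ¬((x1 ≤ s1 ∧ s1 ≤ x2) ∧ (y1 ≤ t2 ∧ t2 ≤ y2)) := by
    have := hcor (s1, t2) (by simp)
    simp only [Set.mem_prod, Set.mem_Icc] at this; tauto
  have h21 : ¬((x1 ≤ s2 ∧ s2 ≤ x2) ∧ (y1 ≤ t1 ∧ t1 ≤ y2)) := by
    have := hcor (s2, t1) (by simp)
    simp only [Set.mem_prod, Set.mem_Icc] at this; tauto
  have h22 : ¬((x1 ≤ s2 ∧ s2 ≤ x2) ∧ (y1 ≤ t2 ∧ t2 ≤ y2)) := by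
    have := hcor (s2, t2) (by simp)
    simp only [Set.mem_prod, Set.mem_Icc] at this; tauto
  have hLne : (Set.Icc x1 x2 ×ˢ Set.Icc y1 y2 ∩ ({s1} : Set ℝ) ×ˢ Set.Icc t1 t2).Nonempty
      ↔ (x1 ≤ s1 ∧ s1 ≤ x2) := by
    constructor
    · rintro ⟨p, hp⟩
      simp only [Set.mem_inter_iff, Set.mem_prod, Set.mem_Icc, Set.mem_singleton_iff] at hp
      exact ⟨hp.2.1 ▸ hp.1.1.1, hp.2.1 ▸ hp.1.1.2⟩
    · rintro ⟨h1, h2⟩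
      refine ⟨(s1, max y1 t1), ?_⟩
      simp only [Set.mem_inter_iff, Set.mem_prod, Set.mem_Icc, Set.mem_singleton_iff]
      exact ⟨⟨⟨h1, h2⟩, le_max_left _ _, max_le hy.le ht1y2⟩, trivial,
        le_max_right _ _, max_le hy1t2 ht.le⟩
  have hRne : (Set.Icc x1 x2 ×ˢ Set.Icc y1 y2 ∩ ({s2} : Set ℝ) ×ˢ Set.Icc t1 t2).Nonempty
      ↔ (x1 ≤ s2 ∧ s2 ≤ x2) := by
    constructor
    · rintro ⟨p, hp⟩
      simp only [Set.mem_inter_iff, Set.mem_prod, Set.mem_Icc, Set.mem_singleton_iff] at hp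
      exact ⟨hp.2.1 ▸ hp.1.1.1, hp.2.1 ▸ hp.1.1.2⟩
    · rintro ⟨h1, h2⟩
      refine ⟨(s2, max y1 t1), ?_⟩
      simp only [Set.mem_inter_iff, Set.mem_prod, Set.mem_Icc, Set.mem_singleton_iff]
      exact ⟨⟨⟨h1, h2⟩, le_max_left _ _, max_le hy.le ht1y2⟩, trivial,
        le_max_right _ _, max_le hy1t2 ht.le⟩
  have hBne : (Set.Icc x1 x2 ×ˢ Set.Icc y1 y2 ∩ Set.Icc s1 s2 ×ˢ ({t1} : Set ℝ)).Nonempty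
      ↔ (y1 ≤ t1 ∧ t1 ≤ y2) := by
    constructor
    · rintro ⟨p, hp⟩
      simp only [Set.mem_inter_iff, Set.mem_prod, Set.mem_Icc, Set.mem_singleton_iff] at hp
      exact ⟨hp.2.2 ▸ hp.1.2.1, hp.2.2 ▸ hp.1.2.2⟩
    · rintro ⟨h1, h2⟩
      refine ⟨(max x1 s1, t1), ?_⟩
      simp only [Set.mem_inter_iff, Set.mem_prod, Set.mem_Icc, Set.mem_singleton_iff]
      exact ⟨⟨⟨le_max_left _ _, max_le hx.le hs1x2⟩, h1, h2⟩,
        ⟨le_max_right _ _, max_le hx1s2 hs.le⟩, trivial⟩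
  have hTne : (Set.Icc x1 x2 ×ˢ Set.Icc y1 y2 ∩ Set.Icc s1 s2 ×ˢ ({t2} : Set ℝ)).Nonempty
      ↔ (y1 ≤ t2 ∧ t2 ≤ y2) := by
    constructor
    · rintro ⟨p, hp⟩
      simp only [Set.mem_inter_iff, Set.mem_prod, Set.mem_Icc, Set.mem_singleton_iff] at hp
      exact ⟨hp.2.2 ▸ hp.1.2.1, hp.2.2 ▸ hp.1.2.2⟩
    · rintro ⟨h1, h2⟩
      refine ⟨(max x1 s1, t2), ?_⟩
      simp only [Set.mem_inter_iff, Set.mem_prod, Set.mem_Icc, Set.mem_singleton_iff]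
      exact ⟨⟨⟨le_max_left _ _, max_le hx.le hs1x2⟩, h1, h2⟩,
        ⟨le_max_right _ _, max_le hx1s2 hs.le⟩, trivial⟩
  have hLe := (Set.not_nonempty_iff_eq_empty.symm.trans (not_iff_not.mpr hLne))
  have hRe := (Set.not_nonempty_iff_eq_empty.symm.trans (not_iff_not.mpr hRne))
  have hBe := (Set.not_nonempty_iff_eq_empty.symm.trans (not_iff_not.mpr hBne))
  have hTe := (Set.not_nonempty_iff_eq_empty.symm.trans (not_iff_not.mpr hTne))
  have hint : ¬(x1 ≤ s1 ∧ s1 ≤ x2) → ¬(x1 ≤ s2 ∧ s2 ≤ x2) → ¬(y1 ≤ t1 ∧ t1 ≤ y2) →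
      ¬(y1 ≤ t2 ∧ t2 ≤ y2) →
      Set.Icc x1 x2 ×ˢ Set.Icc y1 y2 ⊆ interior (Set.Icc s1 s2 ×ˢ Set.Icc t1 t2) := by
    intro hA hB hC hD
    push_neg at hA hB hC hD
    have hs1 : s1 < x1 := by
      rcases lt_or_ge s1 x1 with h | h
      · exact h
      · exact absurd (hA h) (not_lt.mpr hs1x2)
    have hs2 : x2 < s2 := by
      rcases lt_or_ge x2 s2 with h | h
      · exact h
      · exact absurd (hB hx1s2) (not_lt.mpr h)
    have ht1 : t1 < y1 := by
      rcases lt_or_ge t1 y1 with h | h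
      · exact h
      · exact absurd (hC h) (not_lt.mpr ht1y2)
    have ht2 : y2 < t2 := by
      rcases lt_or_ge y2 t2 with h | h
      · exact h
      · exact absurd (hD hy1t2) (not_lt.mpr h)
    have hsub : Set.Icc x1 x2 ×ˢ Set.Icc y1 y2 ⊆ Set.Ioo s1 s2 ×ˢ Set.Ioo t1 t2 := by
      rintro ⟨a, b⟩ hab
      simp only [Set.mem_prod, Set.mem_Icc, Set.mem_Ioo] at *
      exact ⟨⟨lt_of_lt_of_le hs1 hab.1.1, lt_of_le_of_lt hab.1.2 hs2⟩,
        ⟨lt_of_lt_of_le ht1 hab.2.1, lt_of_le_of_lt hab.2.2 ht2⟩⟩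
    exact hsub.trans (interior_maximal
      (Set.prod_mono Set.Ioo_subset_Icc_self Set.Ioo_subset_Icc_self)
      (isOpen_Ioo.prod isOpen_Ioo))
  simp only [hLne, hRne, hBne, hTne, hLe, hRe, hBe, hTe]
  exact exactlyOne4_key _ _ _ _ _ h11 h12 h21 h22 hint
end

section
/- Let R, r, r' be axis-aligned rectangles. Suppose R intersects both vertical edges of r and no corner of r lies in R (R crosses r vertically), and R intersects both horizontal edges of r' and no corner of r' lies in R (R crosses r' horizontally). Then the interiors of r and r' intersect: int(r) ∩ int(r') ≠ ∅. -/
/-- If a rectangle `R` crosses a rectangle `r` vertically (it meets both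
vertical edges of `r`, and no corner of `r` lies in `R`) and crosses a
rectangle `r'` horizontally (it meets both horizontal edges of `r'`, and no
corner of `r'` lies in `R`), then the interiors of `r` and `r'` intersect. -/
theorem vertical_and_horizontal_crossings_overlap
    (x1 x2 y1 y2 p1 p2 q1 q2 p1' p2' q1' q2' : ℝ)
    (hx : x1 < x2) (hy : y1 < y2) (hp : p1 < p2) (hq : q1 < q2)
    (hp' : p1' < p2') (hq' : q1' < q2')
    (R r r' : Set (ℝ × ℝ))
    (hR : R = Set.Icc x1 x2 ×ˢ Set.Icc y1 y2)
    (hrr : r = Set.Icc p1 p2 ×ˢ Set.Icc q1 q2)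
    (hrr' : r' = Set.Icc p1' p2' ×ˢ Set.Icc q1' q2')
    -- `R` crosses `r` vertically
    (hleft : (R ∩ ({p1} : Set ℝ) ×ˢ Set.Icc q1 q2).Nonempty)
    (hright : (R ∩ ({p2} : Set ℝ) ×ˢ Set.Icc q1 q2).Nonempty)
    (hcor : ∀ q ∈ ({(p1, q1), (p1, q2), (p2, q1), (p2, q2)} : Set (ℝ × ℝ)), q ∉ R)
    -- `R` crosses `r'` horizontally
    (hbot : (R ∩ Set.Icc p1' p2' ×ˢ ({q1'} : Set ℝ)).Nonempty)
    (htop : (R ∩ Set.Icc p1' p2' ×ˢ ({q2'} : Set ℝ)).Nonempty)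
    (hcor' : ∀ q ∈ ({(p1', q1'), (p1', q2'), (p2', q1'), (p2', q2')} : Set (ℝ × ℝ)), q ∉ R) :
    (interior r ∩ interior r').Nonempty := by
  subst hR hrr hrr'
  obtain ⟨⟨a, b⟩, ⟨⟨hax, hby⟩, hae, hbq⟩⟩ := hleft
  obtain ⟨⟨c, d⟩, ⟨⟨hcx, hdy⟩, hce, hdq⟩⟩ := hright
  obtain ⟨⟨e, f⟩, ⟨⟨hex, hfy⟩, hep, hfq⟩⟩ := hbot
  obtain ⟨⟨g, h⟩, ⟨⟨hgx, hhy⟩, hgp, hhq⟩⟩ := htop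
  simp only [Set.mem_singleton_iff, Set.mem_Icc] at *
  subst hae hce hfq hhq
  -- corners of r not in R : p1, p2 ∈ [x1,x2], so q1, q2 ∉ [y1,y2]
  have hq1 : q1 < y1 := by
    by_contra hlt
    push_neg at hlt
    exact hcor (a, q1) (by simp) ⟨hax, hlt, le_trans hbq.1 hby.2⟩
  have hq2 : y2 < q2 := by
    by_contra hlt
    push_neg at hlt
    exact hcor (a, q2) (by simp) ⟨hax, le_trans hby.1 hbq.2, hlt⟩
  have hp1 : p1' < x1 := by
    by_contra hlt
    push_neg at hlt
    exact hcor' (p1', f) (by simp) ⟨⟨hlt, le_trans hep.1 hex.2⟩, hfy⟩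
  have hp2 : x2 < p2' := by
    by_contra hlt
    push_neg at hlt
    exact hcor' (p2', f) (by simp) ⟨⟨le_trans hex.1 hep.2, hlt⟩, hfy⟩
  refine ⟨((a + c) / 2, (f + h) / 2), ?_, ?_⟩ <;>
    rw [interior_prod_eq, interior_Icc, interior_Icc] <;>
    constructor <;> constructor <;> simp only [] <;> linarith [hax.1, hax.2, hcx.1, hcx.2, hfy.1, hfy.2, hhy.1, hhy.2]
end

section
/- Let ρ ≥ 1 be a real number and let R be an axis-aligned rectangle whose width is at most ρ times its height. Let F be a finite family of axis-aligned rectangles with pairwise disjoint interiors such that every r ∈ F satisfies: the height of r is at most 3 times the width of r, R intersects both vertical edges of r, and no corner of r lies in R. Then the cardinality of F is strictly less than 3ρ. -/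
open MeasureTheory

/-- Let `ρ ≥ 1` and let `R = [x1,x2] × [y1,y2]` be an axis-aligned rectangle
whose width is at most `ρ` times its height.  If `F` is a finite family of
axis-aligned rectangles with pairwise disjoint interiors such that every
`r ∈ F` has height at most `3` times its width, `R` intersects both vertical
edges of `r`, and no corner of `r` lies in `R`, then `|F| < 3ρ`. -/
theorem crossed_rectangles_count (ρ : ℝ) (hρ : 1 ≤ ρ)
    (x1 x2 y1 y2 : ℝ) (hx : x1 < x2) (hy : y1 < y2)
    (hwidth : x2 - x1 ≤ ρ * (y2 - y1))
    (R : Set (ℝ × ℝ)) (hR : R = Set.Icc x1 x2 ×ˢ Set.Icc y1 y2)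
    (F : Finset (Set (ℝ × ℝ)))
    (hF : ∀ r ∈ F, ∃ p1 p2 q1 q2 : ℝ, p1 < p2 ∧ q1 < q2 ∧
      r = Set.Icc p1 p2 ×ˢ Set.Icc q1 q2 ∧
      q2 - q1 ≤ 3 * (p2 - p1) ∧
      (R ∩ ({p1} : Set ℝ) ×ˢ Set.Icc q1 q2).Nonempty ∧
      (R ∩ ({p2} : Set ℝ) ×ˢ Set.Icc q1 q2).Nonempty ∧
      (∀ q ∈ ({(p1, q1), (p1, q2), (p2, q1), (p2, q2)} : Set (ℝ × ℝ)), q ∉ R))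
    (hdisj : ∀ r ∈ F, ∀ r' ∈ F, r ≠ r' → interior r ∩ interior r' = ∅) :
    (F.card : ℝ) < 3 * ρ := by
  subst hR
  rcases F.eq_empty_or_nonempty with hFe | hFne
  · simp only [hFe, Finset.card_empty, Nat.cast_zero]
    nlinarith
  have hh0 : (0:ℝ) < y2 - y1 := by linarith
  choose a b c d hab hcd hreq h3 he1 he2 hcorner using hF
  -- Basic geometric facts for each rectangle
  have facts : ∀ r (hrF : r ∈ F),
      a r hrF ∈ Set.Icc x1 x2 ∧ b r hrF ∈ Set.Icc x1 x2 ∧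
      c r hrF < y1 ∧ y2 < d r hrF := by
    intro r hrF
    obtain ⟨p, hp1, hp2⟩ := he1 r hrF
    obtain ⟨q, hq1, hq2⟩ := he2 r hrF
    simp only [Set.mem_prod, Set.mem_singleton_iff, Set.mem_Icc] at hp1 hp2 hq1 hq2
    have haI : x1 ≤ a r hrF ∧ a r hrF ≤ x2 := by rw [← hp2.1]; exact hp1.1
    have hbI : x1 ≤ b r hrF ∧ b r hrF ≤ x2 := by rw [← hq2.1]; exact hq1.1
    have hca : ¬ (y1 ≤ c r hrF ∧ c r hrF ≤ y2) := by
      intro h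
      exact hcorner r hrF (a r hrF, c r hrF) (by simp)
        (by simp only [Set.mem_prod, Set.mem_Icc]; exact ⟨haI, h⟩)
    have hda : ¬ (y1 ≤ d r hrF ∧ d r hrF ≤ y2) := by
      intro h
      exact hcorner r hrF (a r hrF, d r hrF) (by simp)
        (by simp only [Set.mem_prod, Set.mem_Icc]; exact ⟨haI, h⟩)
    have hcy2 : c r hrF ≤ y2 := le_trans hp2.2.1 hp1.2.2
    have hdy1 : y1 ≤ d r hrF := le_trans hp1.2.1 hp2.2.2
    push_neg at hca hda
    exact ⟨⟨haI.1, haI.2⟩, ⟨hbI.1, hbI.2⟩, by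
      by_contra hle; push_neg at hle; exact absurd (hca hle) (not_lt.mpr hcy2),
      hda hdy1⟩
  -- strict width lower bound
  have hwlb : ∀ r (hrF : r ∈ F), (y2 - y1) / 3 < b r hrF - a r hrF := by
    intro r hrF
    obtain ⟨_, _, hc, hd⟩ := facts r hrF
    have := h3 r hrF
    linarith
  -- the open intervals of the bases are pairwise disjoint
  set A : {r // r ∈ F} → Set ℝ := fun r => Set.Ioo (a r.1 r.2) (b r.1 r.2) with hA
  have hm : (y1 + y2) / 2 ∈ Set.Icc y1 y2 := by constructor <;> linarith
  have hdisjA : (↑F.attach : Set {r // r ∈ F}).PairwiseDisjoint A := by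
    intro r _ r' _ hne
    have hne' : r.1 ≠ r'.1 := fun h => hne (Subtype.ext h)
    simp only [Function.onFun]
    rw [Set.disjoint_left]
    intro t ht ht'
    have hint : ∀ (s : {r // r ∈ F}), t ∈ A s → ((t, (y1+y2)/2) : ℝ × ℝ) ∈ interior s.1 := by
      intro s hts
      rw [hreq s.1 s.2, interior_prod_eq, interior_Icc, interior_Icc]
      obtain ⟨_, _, hc, hd⟩ := facts s.1 s.2
      exact ⟨hts, by constructor <;> [linarith [hm.1]; linarith [hm.2]]⟩
    have h0 := hdisj r.1 r.2 r'.1 r'.2 hne'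
    have : ((t, (y1+y2)/2) : ℝ × ℝ) ∈ interior r.1 ∩ interior r'.1 :=
      ⟨hint r ht, hint r' ht'⟩
    rw [h0] at this
    exact this
  -- sum of lengths bounded by x2 - x1 via Lebesgue measure
  have hsub : ∀ s : {r // r ∈ F}, A s ⊆ Set.Icc x1 x2 := by
    intro s t ht
    obtain ⟨ha', hb', _, _⟩ := facts s.1 s.2
    exact ⟨le_of_lt (lt_of_le_of_lt ha'.1 ht.1), le_of_lt (lt_of_lt_of_le ht.2 hb'.2)⟩
  have hmeas : ∑ s ∈ F.attach, volume (A s) = volume (⋃ s ∈ F.attach, A s) :=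
    (measure_biUnion_finset hdisjA (fun s _ => measurableSet_Ioo)).symm
  have hle1 : volume (⋃ s ∈ F.attach, A s) ≤ volume (Set.Icc x1 x2) :=
    measure_mono (Set.iUnion₂_subset fun s _ => hsub s)
  have hsumle : ∑ s ∈ F.attach, (b s.1 s.2 - a s.1 s.2) ≤ x2 - x1 := by
    have hnn : ∀ s : {r // r ∈ F}, 0 ≤ b s.1 s.2 - a s.1 s.2 :=
      fun s => le_of_lt (sub_pos.mpr (hab s.1 s.2))
    have : ENNReal.ofReal (∑ s ∈ F.attach, (b s.1 s.2 - a s.1 s.2))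
        ≤ ENNReal.ofReal (x2 - x1) := by
      rw [ENNReal.ofReal_sum_of_nonneg (fun s _ => hnn s)]
      calc ∑ s ∈ F.attach, ENNReal.ofReal (b s.1 s.2 - a s.1 s.2)
          = ∑ s ∈ F.attach, volume (A s) := by
            refine Finset.sum_congr rfl fun s _ => ?_
            rw [hA]; simp [Real.volume_Ioo]
        _ = volume (⋃ s ∈ F.attach, A s) := hmeas
        _ ≤ volume (Set.Icc x1 x2) := hle1
        _ = ENNReal.ofReal (x2 - x1) := Real.volume_Icc
    exact (ENNReal.ofReal_le_ofReal_iff (by linarith)).mp this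
  have hcardlt : (F.card : ℝ) * ((y2 - y1) / 3) < ∑ s ∈ F.attach, (b s.1 s.2 - a s.1 s.2) := by
    have := Finset.sum_lt_sum_of_nonempty (s := F.attach)
      (f := fun _ => (y2 - y1) / 3) (g := fun s : {r // r ∈ F} => b s.1 s.2 - a s.1 s.2)
      (hFne.attach) (fun s _ => hwlb s.1 s.2)
    simpa [Finset.sum_const, Finset.card_attach, nsmul_eq_mul] using this
  have hfinal : (F.card : ℝ) * ((y2 - y1) / 3) < ρ * (y2 - y1) := lt_of_lt_of_le hcardlt (le_trans hsumle hwidth)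
  nlinarith [hfinal, hh0]
end
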